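/- Let D be a principal ideal domain, p prime, B ∈ M_n(D). Suppose for some t ≥ 1 there is a (p^t)-minimal polynomial ν_t with deg(ν_t) = deg(μ_B), where μ_B is the minimal polynomial of B over the quotient field. Then for all s ≥ t, μ_B is a (p^s)-minimal polynomial of B: indeed μ_B ∈ N_{(p^s)}(B) ⊇ μ_B·D[X] and every monic f ∈ N_{(p^s)}(B) has deg(f) ≥ deg(μ_B). -/

import Mathlib

open Polynomial Matrix

namespace Matrix

variable {m R A : Type*} [Fintype m] [DecidableEq m] [CommSemiring R] [CommSemiring A] [Algebra R A]

theorem aeval_map_algebraMap (B : Matrix m m R) (f : R[X]) :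
    aeval (B.map (algebraMap R A)) (f.map (algebraMap R A)) =
      (aeval B f).map (algebraMap R A) := by
  rw [Polynomial.aeval_map_algebraMap]
  exact aeval_algHom_apply (Algebra.ofId R A).mapMatrix B f

theorem aeval_eq_zero_of_aeval_map_eq_zero (hinj : Function.Injective (algebraMap R A))
    {B : Matrix m m R} {f : R[X]}
    (h : aeval (B.map (algebraMap R A)) (f.map (algebraMap R A)) = 0) : aeval B f = 0 := by
  rw [aeval_map_algebraMap] at h
  ext i j
  exact hinj (by simpa using congrFun (congrFun h i) j)

end Matrix

theorem stmt17_general (D : Type*) [CommRing D] [IsDomain D]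
    (n : ℕ) (B : Matrix (Fin n) (Fin n) D) (p : D)
    (μD : Polynomial D)
    (hμ : μD.map (algebraMap D (FractionRing D)) =
      minpoly (FractionRing D) (B.map (algebraMap D (FractionRing D))))
    (t : ℕ) (νt : Polynomial D)
    (hνt : νt.Monic ∧ (∀ i j, p ^ t ∣ Polynomial.aeval B νt i j) ∧
      ∀ g : Polynomial D, g.Monic → (∀ i j, p ^ t ∣ Polynomial.aeval B g i j) →
        νt.natDegree ≤ g.natDegree)
    (hdeg : νt.natDegree = μD.natDegree) :
    ∀ s : ℕ, t ≤ s →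
      (∀ i j, p ^ s ∣ Polynomial.aeval B μD i j) ∧
      ∀ f : Polynomial D, f.Monic → (∀ i j, p ^ s ∣ Polynomial.aeval B f i j) →
        μD.natDegree ≤ f.natDegree := by
  intro s hts
  have hμB : aeval B μD = 0 :=
    aeval_eq_zero_of_aeval_map_eq_zero (IsFractionRing.injective D (FractionRing D))
      (hμ ▸ minpoly.aeval _ _)
  refine ⟨fun i j => by simp [hμB], fun f hf hfs => ?_⟩
  rw [← hdeg]
  exact hνt.2.2 f hf fun i j => (pow_dvd_pow p hts).trans (hfs i j)

theorem stmt17 (D : Type*) [CommRing D] [IsDomain D] [IsPrincipalIdealRing D]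
    (n : ℕ) (hn : 0 < n) (B : Matrix (Fin n) (Fin n) D) (p : D) (hp : Prime p)
    (μD : Polynomial D)
    (hμ : μD.map (algebraMap D (FractionRing D)) =
      minpoly (FractionRing D) (B.map (algebraMap D (FractionRing D))))
    (t : ℕ) (ht : 1 ≤ t) (νt : Polynomial D)
    (hνt : νt.Monic ∧ (∀ i j, p ^ t ∣ Polynomial.aeval B νt i j) ∧
      ∀ g : Polynomial D, g.Monic → (∀ i j, p ^ t ∣ Polynomial.aeval B g i j) →
        νt.natDegree ≤ g.natDegree)
    (hdeg : νt.natDegree = μD.natDegree) :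
    ∀ s : ℕ, t ≤ s →
      (∀ i j, p ^ s ∣ Polynomial.aeval B μD i j) ∧
      ∀ f : Polynomial D, f.Monic → (∀ i j, p ^ s ∣ Polynomial.aeval B f i j) →
        μD.natDegree ≤ f.natDegree :=
  stmt17_general D n B p μD hμ t νt hνt hdeg
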